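/- Expectation of a product of two Wick monomials reproduces a cumulant: for a nonempty sequence I and a single index j, E[ :y^I: · :y_j: ] = E[ :y^I: · y_j ] = κ[y_{I+(j)}], the joint cumulant of the variables in I together with y_j. -/

import Mathlib

open MeasureTheory Finset

/-- The moment `E[y^A]` of the labeled family `(y i)_{i ∈ A}`. -/
noncomputable def mom {Ω : Type*} [MeasurableSpace Ω] {ι : Type*}
    (μ : Measure Ω) (y : ι → Ω → ℝ) (A : Finset ι) : ℝ :=
  ∫ ω, ∏ i ∈ A, y i ω ∂μ

open scoped Classical in
/-- Set partitions of a finite (label) set `A`: finsets of nonempty pairwise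
disjoint blocks whose union is `A`. -/
noncomputable def partitionsOf {ι : Type*} (A : Finset ι) : Finset (Finset (Finset ι)) :=
  A.powerset.powerset.filter fun π =>
    (∀ B ∈ π, B.Nonempty) ∧ (∀ B ∈ π, ∀ C ∈ π, B ≠ C → Disjoint B C) ∧ π.sup id = A

/-- The joint cumulant `κ[y_A]`, defined by the (Möbius-inverted form of the)
moments-to-cumulants recursion. -/
noncomputable def cum {Ω : Type*} [MeasurableSpace Ω] {ι : Type*}
    (μ : Measure Ω) (y : ι → Ω → ℝ) (A : Finset ι) : ℝ :=
  ∑ π ∈ partitionsOf A,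
    (-1 : ℝ) ^ (π.card - 1) * (Nat.factorial (π.card - 1)) * ∏ B ∈ π, mom μ y B

/-- The Wick polynomial `:y^I:` defined by the recursion
`:y^I: = y^I − Σ_{∅≠E⊆I} E[y^E]·:y^{I∖E}:`, with `:y^∅: = 1`. -/
noncomputable def wick {Ω : Type*} [MeasurableSpace Ω] {ι : Type*} [DecidableEq ι]
    (μ : Measure Ω) (y : ι → Ω → ℝ) (I : Finset ι) : Ω → ℝ :=
  fun ω => (∏ i ∈ I, y i ω) -
    ∑ E ∈ (I.powerset.filter fun E => E ≠ ∅).attach,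
      mom μ y E.1 * wick μ y (I \ E.1) ω
termination_by I.card
decreasing_by
  have h := E.2
  simp only [Finset.mem_filter, Finset.mem_powerset] at h
  exact Finset.card_lt_card (Finset.sdiff_ssubset h.1 (Finset.nonempty_iff_ne_empty.mpr h.2))

/-!
Unfolding the Wick recursion once gives
`E[:y^I: y_j] = E[y^{I+j}] - Σ_{∅≠E⊆I} E[y^E] E[:y^{I∖E}: y_j]`, so by induction on `|I|` it
suffices that cumulants obey the same recursion
`κ(I+j) = E[y^{I+j}] - Σ_{∅≠E⊆I} E[y^E] κ((I∖E)+j)`.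
This is combinatorial: a nonempty `E ⊆ I` together with a partition of the remaining labels is
the same as a partition `π` of `I+j` with a marked block avoiding `j`. A partition with `k ≥ 2`
blocks has `k - 1` such markings, each weighted `(-1)^(k-2) (k-2)!`, which cancels its weight
`(-1)^(k-1) (k-1)!` in `κ(I+j)`; only the one-block partition survives, giving the moment.
Finally `:y_j: = y_j - E[y_j]` and `E[:y^I:] = 0` for nonempty `I` give the first equality.
-/

section Partitions

variable {ι : Type*} [DecidableEq ι] {A : Finset ι} {π : Finset (Finset ι)}

theorem mem_partitionsOf :
    π ∈ partitionsOf A ↔ (∀ B ∈ π, B.Nonempty) ∧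
      (∀ B ∈ π, ∀ C ∈ π, B ≠ C → Disjoint B C) ∧ π.sup id = A := by
  have hsub : (∀ B ∈ π, B.Nonempty) ∧ (∀ B ∈ π, ∀ C ∈ π, B ≠ C → Disjoint B C) ∧
      π.sup id = A → π ⊆ A.powerset := by
    rintro ⟨-, -, rfl⟩ B hB
    exact mem_powerset.2 (le_sup (f := id) hB)
  -- `partitionsOf` uses classical decidable equality; `congr!` identifies the two `Finset.sup`s.
  unfold partitionsOf
  simp only [mem_filter]
  rw [mem_powerset]
  convert and_iff_right_of_imp hsub using 4
  congr!

theorem nonempty_of_mem_partitionsOf (hπ : π ∈ partitionsOf A) {B : Finset ι} (hB : B ∈ π) :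
    B.Nonempty :=
  (mem_partitionsOf.1 hπ).1 B hB

theorem subset_of_mem_partitionsOf (hπ : π ∈ partitionsOf A) {B : Finset ι} (hB : B ∈ π) :
    B ⊆ A :=
  (mem_partitionsOf.1 hπ).2.2 ▸ le_sup (f := id) hB

theorem singleton_mem_partitionsOf (hA : A.Nonempty) : {A} ∈ partitionsOf A :=
  mem_partitionsOf.2 ⟨by simpa using hA, by simp, by simp⟩

theorem eq_singleton_of_mem_partitionsOf (hπ : π ∈ partitionsOf A) (h : π.card = 1) :
    π = {A} := by
  obtain ⟨B, rfl⟩ := card_eq_one.1 h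
  simpa using (mem_partitionsOf.1 hπ).2.2

theorem card_filter_notMem_of_mem_partitionsOf (hπ : π ∈ partitionsOf A) {j : ι} (hj : j ∈ A) :
    (π.filter fun B => j ∉ B).card = π.card - 1 := by
  obtain ⟨-, hd, hA⟩ := mem_partitionsOf.1 hπ
  obtain ⟨B₀, hB₀, hjB₀⟩ : ∃ B ∈ π, j ∈ B := by simpa [← hA, mem_sup] using hj
  have hunique : π.filter (fun B => j ∈ B) = {B₀} := by
    refine eq_singleton_iff_unique_mem.2 ⟨mem_filter.2 ⟨hB₀, hjB₀⟩, fun C hC => ?_⟩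
    obtain ⟨hCπ, hjC⟩ := mem_filter.1 hC
    by_contra hne
    exact disjoint_left.1 (hd C hCπ B₀ hB₀ hne) hjC hjB₀
  have := card_filter_add_card_filter_not (s := π) (fun B => j ∈ B)
  rw [hunique, card_singleton] at this
  omega

variable {E : Finset ι}

theorem erase_mem_partitionsOf (hπ : π ∈ partitionsOf A) (hE : E ∈ π) :
    π.erase E ∈ partitionsOf (A \ E) := by
  obtain ⟨hne, hd, rfl⟩ := mem_partitionsOf.1 hπ
  refine mem_partitionsOf.2 ⟨fun B hB => hne B (mem_of_mem_erase hB),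
    fun B hB C hC => hd B (mem_of_mem_erase hB) C (mem_of_mem_erase hC), ?_⟩
  ext x
  simp only [mem_sup, mem_erase, mem_sdiff, id]
  constructor
  · rintro ⟨B, ⟨hBE, hB⟩, hx⟩
    exact ⟨⟨B, hB, hx⟩, disjoint_left.1 (hd B hB E hE hBE) hx⟩
  · rintro ⟨⟨B, hB, hx⟩, hxE⟩
    exact ⟨B, ⟨by rintro rfl; exact hxE hx, hB⟩, hx⟩

theorem insert_mem_partitionsOf (hEA : E ⊆ A) (hE : E.Nonempty) {σ : Finset (Finset ι)}
    (hσ : σ ∈ partitionsOf (A \ E)) : insert E σ ∈ partitionsOf A := by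
  obtain ⟨hne, hd, hsup⟩ := mem_partitionsOf.1 hσ
  have hdisj : ∀ B ∈ σ, Disjoint B E := fun B hB =>
    disjoint_of_subset_left (subset_of_mem_partitionsOf hσ hB) sdiff_disjoint
  refine mem_partitionsOf.2 ⟨?_, ?_, ?_⟩
  · simpa [hE] using hne
  · intro B hB C hC hBC
    rcases mem_insert.1 hB with rfl | hB' <;> rcases mem_insert.1 hC with rfl | hC'
    · exact absurd rfl hBC
    · exact (hdisj C hC').symm
    · exact hdisj B hB'
    · exact hd B hB' C hC' hBC
  · rw [sup_insert, hsup]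
    exact union_sdiff_of_subset hEA

theorem notMem_of_mem_partitionsOf_sdiff (hE : E.Nonempty) {σ : Finset (Finset ι)}
    (hσ : σ ∈ partitionsOf (A \ E)) : E ∉ σ := fun h =>
  let ⟨_, hx⟩ := hE
  (mem_sdiff.1 (subset_of_mem_partitionsOf hσ h hx)).2 hx

theorem sum_partitionsOf_sdiff {M : Type*} [AddCommMonoid M] (hEA : E ⊆ A) (hE : E.Nonempty)
    (f : Finset (Finset ι) → M) :
    ∑ σ ∈ partitionsOf (A \ E), f σ = ∑ π ∈ partitionsOf A with E ∈ π, f (π.erase E) :=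
  sum_nbij' (insert E) (fun π => π.erase E)
    (fun _ hσ => mem_filter.2 ⟨insert_mem_partitionsOf hEA hE hσ, mem_insert_self _ _⟩)
    (fun _ hπ => erase_mem_partitionsOf (mem_filter.1 hπ).1 (mem_filter.1 hπ).2)
    (fun _ hσ => erase_insert (notMem_of_mem_partitionsOf_sdiff hE hσ))
    (fun _ hπ => insert_erase (mem_filter.1 hπ).2)
    (fun _ hσ => by rw [erase_insert (notMem_of_mem_partitionsOf_sdiff hE hσ)])

theorem sum_sum_partitionsOf_sdiff {M : Type*} [AddCommMonoid M] (S : Finset (Finset ι))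
    (hS : ∀ E ∈ S, E ⊆ A ∧ E.Nonempty) (f : Finset ι → Finset (Finset ι) → M) :
    ∑ E ∈ S, ∑ σ ∈ partitionsOf (A \ E), f E σ =
      ∑ π ∈ partitionsOf A, ∑ E ∈ π with E ∈ S, f E (π.erase E) := by
  calc ∑ E ∈ S, ∑ σ ∈ partitionsOf (A \ E), f E σ
      = ∑ E ∈ S, ∑ π ∈ partitionsOf A with E ∈ π, f E (π.erase E) :=
        sum_congr rfl fun E hE => sum_partitionsOf_sdiff (hS E hE).1 (hS E hE).2 _
    _ = _ := sum_comm' fun E π => by simp only [mem_filter]; tauto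

end Partitions

section Cumulant

variable {ι : Type*}

noncomputable def cumulantTerm (m : Finset ι → ℝ) (π : Finset (Finset ι)) : ℝ :=
  (-1 : ℝ) ^ (π.card - 1) * (Nat.factorial (π.card - 1)) * ∏ B ∈ π, m B

noncomputable def cumulantOf (m : Finset ι → ℝ) (A : Finset ι) : ℝ :=
  ∑ π ∈ partitionsOf A, cumulantTerm m π

theorem cum_eq_cumulantOf {Ω : Type*} [MeasurableSpace Ω] (μ : Measure Ω) (y : ι → Ω → ℝ)
    (A : Finset ι) : cum μ y A = cumulantOf (mom μ y) A :=
  rfl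

variable [DecidableEq ι]

theorem mul_cumulantTerm_erase (m : Finset ι → ℝ) {π : Finset (Finset ι)} {E : Finset ι}
    (hE : E ∈ π) :
    m E * cumulantTerm m (π.erase E) =
      (-1 : ℝ) ^ (π.card - 2) * (Nat.factorial (π.card - 2)) * ∏ B ∈ π, m B := by
  rw [cumulantTerm, card_erase_of_mem hE, ← mul_prod_erase π m hE, Nat.sub_sub]
  ring

/-- Each of the `#π - 1` blocks avoiding `j` contributes `(-1)^(#π-2) (#π-2)! ∏ B ∈ π, m B`;
together they cancel `cumulantTerm m π` unless `π` has a single block. -/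
theorem cumulantTerm_add_sum_mul_cumulantTerm_erase (m : Finset ι → ℝ) {A : Finset ι}
    {π : Finset (Finset ι)} (hπ : π ∈ partitionsOf A) {j : ι} (hj : j ∈ A) :
    cumulantTerm m π + ∑ E ∈ π with j ∉ E, m E * cumulantTerm m (π.erase E) =
      if π = {A} then m A else 0 := by
  split_ifs with hA
  · subst hA
    simp [cumulantTerm, filter_singleton, hj]
  · have hpos : 0 < π.card := card_pos.2 <| nonempty_iff_ne_empty.2 fun h => by
      simp [h, mem_partitionsOf] at hπ
      simp [← hπ] at hj
    obtain ⟨n, hn⟩ : ∃ n, π.card = n + 2 := ⟨π.card - 2, by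
      have := mt (eq_singleton_of_mem_partitionsOf hπ) hA
      omega⟩
    rw [sum_congr rfl fun E hE => mul_cumulantTerm_erase m (mem_filter.1 hE).1,
      sum_const, card_filter_notMem_of_mem_partitionsOf hπ hj, nsmul_eq_mul, cumulantTerm, hn]
    simp only [Nat.add_sub_cancel, show n + 2 - 1 = n + 1 by omega, Nat.factorial_succ]
    push_cast
    ring

theorem cumulantOf_insert (m : Finset ι → ℝ) {I : Finset ι} {j : ι} (hj : j ∉ I) :
    cumulantOf m (insert j I) =
      m (insert j I) - ∑ E ∈ I.powerset with E ≠ ∅, m E * cumulantOf m (insert j (I \ E)) := by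
  set A := insert j I
  set S := I.powerset.filter fun E => E ≠ ∅
  have hS : ∀ E ∈ S, E ⊆ A ∧ E.Nonempty := fun E hE => by
    obtain ⟨hEI, hE⟩ := mem_filter.1 hE
    exact ⟨(mem_powerset.1 hEI).trans (subset_insert j I), nonempty_iff_ne_empty.2 hE⟩
  have hblocks : ∀ π ∈ partitionsOf A, π.filter (· ∈ S) = π.filter (j ∉ ·) := fun π hπ =>
    filter_congr fun E hE => by
      have hEA := subset_of_mem_partitionsOf hπ hE
      simp only [S, mem_filter, mem_powerset, ← nonempty_iff_ne_empty,
        nonempty_of_mem_partitionsOf hπ hE, and_true]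
      exact ⟨fun hEI hjE => hj (hEI hjE), fun hjE => (subset_insert_iff_of_notMem hjE).1 hEA⟩
  have hsum : ∑ E ∈ S, m E * cumulantOf m (insert j (I \ E)) = m A - cumulantOf m A :=
    calc ∑ E ∈ S, m E * cumulantOf m (insert j (I \ E))
        = ∑ E ∈ S, ∑ σ ∈ partitionsOf (A \ E), m E * cumulantTerm m σ := by
          refine sum_congr rfl fun E hE => ?_
          rw [cumulantOf, mul_sum, insert_sdiff_of_notMem _ fun hjE => hj ?_]
          exact (mem_powerset.1 (mem_filter.1 hE).1) hjE
      _ = ∑ π ∈ partitionsOf A, ∑ E ∈ π with E ∈ S, m E * cumulantTerm m (π.erase E) :=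
          sum_sum_partitionsOf_sdiff S hS _
      _ = ∑ π ∈ partitionsOf A, ((if π = {A} then m A else 0) - cumulantTerm m π) := by
          refine sum_congr rfl fun π hπ => ?_
          rw [hblocks π hπ,
            ← cumulantTerm_add_sum_mul_cumulantTerm_erase m hπ (mem_insert_self j I)]
          ring
      _ = m A - cumulantOf m A := by
          rw [sum_sub_distrib, sum_ite_eq',
            if_pos (singleton_mem_partitionsOf ⟨j, mem_insert_self j I⟩), cumulantOf]
  rw [hsum]
  ring

end Cumulant

section Wick

variable {Ω : Type*} [MeasurableSpace Ω] {ι : Type*} [DecidableEq ι] {μ : Measure Ω}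
  {y : ι → Ω → ℝ}

theorem wick_apply (I : Finset ι) (ω : Ω) :
    wick μ y I ω =
      ∏ i ∈ I, y i ω - ∑ E ∈ I.powerset with E ≠ ∅, mom μ y E * wick μ y (I \ E) ω := by
  rw [wick, sum_attach (I.powerset.filter fun E => E ≠ ∅) fun E => mom μ y E * wick μ y (I \ E) ω]

theorem sdiff_ssubset_of_mem_filter_powerset {I E : Finset ι}
    (hE : E ∈ I.powerset.filter fun E => E ≠ ∅) : I \ E ⊂ I :=
  sdiff_ssubset (mem_powerset.1 (mem_filter.1 hE).1) (nonempty_iff_ne_empty.2 (mem_filter.1 hE).2)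

@[simp]
theorem wick_empty : wick μ y (∅ : Finset ι) = 1 := by
  ext ω
  rw [wick_apply]
  simp [filter_singleton]

theorem wick_singleton (j : ι) : wick μ y {j} = fun ω => y j ω - mom μ y {j} := by
  ext ω
  have hsubsets : ({j} : Finset ι).powerset.filter (fun E => E ≠ ∅) = {{j}} := by
    ext E
    simp only [mem_filter, mem_powerset, subset_singleton_iff, mem_singleton]
    constructor
    · rintro ⟨rfl | rfl, hE⟩
      exacts [absurd rfl hE, rfl]
    · rintro rfl
      exact ⟨Or.inr rfl, singleton_ne_empty j⟩
  rw [wick_apply, hsubsets, sum_singleton, sdiff_self, bot_eq_empty, wick_empty, prod_singleton,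
    Pi.one_apply, mul_one]

theorem wick_mul_eq (I : Finset ι) (g : Ω → ℝ) :
    (fun ω => wick μ y I ω * g ω) = fun ω => (∏ i ∈ I, y i ω) * g ω -
      ∑ E ∈ I.powerset with E ≠ ∅, mom μ y E * (wick μ y (I \ E) ω * g ω) :=
  funext fun ω => by
    rw [wick_apply, sub_mul, sum_mul]
    simp only [mul_assoc]

theorem integrable_wick_mul {g : Ω → ℝ} (I : Finset ι)
    (h : ∀ A ⊆ I, Integrable (fun ω => (∏ i ∈ A, y i ω) * g ω) μ) :
    Integrable (fun ω => wick μ y I ω * g ω) μ := by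
  induction I using Finset.strongInduction with
  | _ I ih =>
    rw [wick_mul_eq]
    refine (h I subset_rfl).sub (integrable_finsetSum _ fun E hE => ?_)
    have hIE := sdiff_ssubset_of_mem_filter_powerset hE
    exact (ih _ hIE fun A hA => h A (hA.trans hIE.subset)).const_mul _

theorem integral_wick_mul {g : Ω → ℝ} (I : Finset ι)
    (h : ∀ A ⊆ I, Integrable (fun ω => (∏ i ∈ A, y i ω) * g ω) μ) :
    ∫ ω, wick μ y I ω * g ω ∂μ = ∫ ω, (∏ i ∈ I, y i ω) * g ω ∂μ -
      ∑ E ∈ I.powerset with E ≠ ∅, mom μ y E * ∫ ω, wick μ y (I \ E) ω * g ω ∂μ := by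
  have hint : ∀ E ∈ I.powerset.filter (fun E => E ≠ ∅),
      Integrable (fun ω => mom μ y E * (wick μ y (I \ E) ω * g ω)) μ := fun E hE =>
    (integrable_wick_mul _ fun A hA =>
      h A (hA.trans (sdiff_ssubset_of_mem_filter_powerset hE).subset)).const_mul _
  rw [wick_mul_eq, integral_sub (h I subset_rfl) (integrable_finsetSum _ hint),
    integral_finsetSum _ hint]
  simp only [integral_const_mul]

theorem integrable_wick {I : Finset ι} (h : ∀ A ⊆ I, Integrable (fun ω => ∏ i ∈ A, y i ω) μ) :
    Integrable (wick μ y I) μ := by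
  simpa using integrable_wick_mul (g := 1) I (by simpa using h)

theorem integrable_prod_mul_of_forall_subset_insert {I : Finset ι} {j : ι} (hj : j ∉ I)
    (h : ∀ A ⊆ insert j I, Integrable (fun ω => ∏ i ∈ A, y i ω) μ) :
    ∀ A ⊆ I, Integrable (fun ω => (∏ i ∈ A, y i ω) * y j ω) μ := fun A hA => by
  simpa [prod_insert fun hjA => hj (hA hjA), mul_comm] using
    h (insert j A) (insert_subset_insert j hA)

theorem integral_wick_of_nonempty [IsProbabilityMeasure μ] {I : Finset ι} (hI : I.Nonempty)
    (h : ∀ A ⊆ I, Integrable (fun ω => ∏ i ∈ A, y i ω) μ) : ∫ ω, wick μ y I ω ∂μ = 0 := by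
  induction I using Finset.strongInduction with
  | _ I ih =>
    have h' : ∀ A ⊆ I, Integrable (fun ω => (∏ i ∈ A, y i ω) * 1) μ := by simpa using h
    have hrec := integral_wick_mul I h'
    simp only [mul_one] at hrec
    rw [hrec, sum_eq_single_of_mem I (mem_filter.2 ⟨mem_powerset_self I, hI.ne_empty⟩)]
    · simp [mom]
    · intro E hE hEI
      have hIE := sdiff_ssubset_of_mem_filter_powerset hE
      have hne : (I \ E).Nonempty :=
        sdiff_nonempty.2 fun hIE' => hEI ((mem_powerset.1 (mem_filter.1 hE).1).antisymm hIE')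
      rw [ih _ hIE hne fun A hA => h A (hA.trans hIE.subset), mul_zero]

theorem integral_wick_mul_eq_cum {I : Finset ι} {j : ι} (hj : j ∉ I)
    (h : ∀ A ⊆ insert j I, Integrable (fun ω => ∏ i ∈ A, y i ω) μ) :
    ∫ ω, wick μ y I ω * y j ω ∂μ = cum μ y (insert j I) := by
  induction I using Finset.strongInduction with
  | _ I ih =>
    rw [integral_wick_mul I (integrable_prod_mul_of_forall_subset_insert hj h), cum_eq_cumulantOf,
      cumulantOf_insert _ hj]
    congr 1
    · simp only [mom, prod_insert hj, mul_comm]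
    · refine sum_congr rfl fun E hE => ?_
      have hIE := sdiff_ssubset_of_mem_filter_powerset hE
      rw [ih _ hIE (fun hjI => hj (mem_sdiff.1 hjI).1)
        fun A hA => h A (hA.trans (insert_subset_insert j hIE.subset)), cum_eq_cumulantOf]

end Wick

/-- `E[:y^I:·:y_j:] = E[:y^I:·y_j] = κ[y_{I+(j)}]`. -/
theorem wick_pair_cumulant {Ω : Type*} [MeasurableSpace Ω] {ι : Type*} [DecidableEq ι]
    (μ : Measure Ω) [IsProbabilityMeasure μ] (y : ι → Ω → ℝ)
    (I : Finset ι) (hI : I.Nonempty) (j : ι) (hj : j ∉ I)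
    (hint : ∀ A ⊆ insert j I, Integrable (fun ω => ∏ i ∈ A, y i ω) μ) :
    (∫ ω, wick μ y I ω * wick μ y {j} ω ∂μ) = cum μ y (insert j I) ∧
    (∫ ω, wick μ y I ω * y j ω ∂μ) = cum μ y (insert j I) := by
  have hintI : ∀ A ⊆ I, Integrable (fun ω => ∏ i ∈ A, y i ω) μ :=
    fun A hA => hint A (hA.trans (subset_insert j I))
  have hpair := integral_wick_mul_eq_cum hj hint
  refine ⟨?_, hpair⟩
  calc ∫ ω, wick μ y I ω * wick μ y {j} ω ∂μ
      = ∫ ω, wick μ y I ω * y j ω - mom μ y {j} * wick μ y I ω ∂μ := by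
        simp only [wick_singleton, mul_sub, mul_comm]
    _ = ∫ ω, wick μ y I ω * y j ω ∂μ - mom μ y {j} * ∫ ω, wick μ y I ω ∂μ := by
        rw [integral_sub
          (integrable_wick_mul I (integrable_prod_mul_of_forall_subset_insert hj hint))
          ((integrable_wick hintI).const_mul _), integral_const_mul]
    _ = cum μ y (insert j I) := by
        rw [integral_wick_of_nonempty hI hintI, mul_zero, sub_zero, hpair]
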